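/- Let S be an ℕ-indexed chain complex of k-modules with every S_n projective and with H_n(S) = 0 for all n. Let 0 → C′ → C → C″ → 0 be a degreewise split short exact sequence of ℕ-indexed chain complexes of k-modules. Then the induced sequence of k-modules of chain maps 0 → Hom(C″, S) → Hom(C, S) → Hom(C′, S) → 0 is exact; in particular every chain map C′ → S extends to a chain map C → S. -/
import Mathlib

/-- An `ℕ`-indexed chain complex of `k`-modules: modules `X n` with differentials
`d n : X (n+1) → X n` satisfying `d ∘ d = 0`. -/
structure Cpx (k : Type) [CommRing k] where
  X : ℕ → ModuleCat.{0} k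
  d : ∀ n, X (n + 1) →ₗ[k] X n
  dd : ∀ n, (d n).comp (d (n + 1)) = 0

/-- A chain map between `ℕ`-indexed chain complexes of `k`-modules. -/
structure CpxHom (k : Type) [CommRing k] (A B : Cpx k) where
  f : ∀ n, A.X n →ₗ[k] B.X n
  comm : ∀ n, (f n).comp (A.d n) = (B.d n).comp (f (n + 1))

/-- Dependent recursive choice along `ℕ`, remembering the base point. -/
lemma depChoice {α : ℕ → Type*} (Q : ∀ n, α n → Prop) (R : ∀ n, α n → α (n + 1) → Prop)
    (a0 : α 0) (q0 : Q 0 a0)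
    (step : ∀ n a, Q n a → ∃ b, Q (n + 1) b ∧ R n a b) :
    ∃ f : ∀ n, α n, f 0 = a0 ∧ ∀ n, R n (f n) (f (n + 1)) := by
  let g : ∀ n, {a : α n // Q n a} := fun n =>
    Nat.rec ⟨a0, q0⟩
      (fun n p => ⟨(step n p.1 p.2).choose, (step n p.1 p.2).choose_spec.1⟩) n
  exact ⟨fun n => (g n).1, rfl, fun n => (step n (g n).1 (g n).2).choose_spec.2⟩

/-- Let `S` be an `ℕ`-indexed chain complex of `k`-modules with every
`S_n` projective and with `H_n(S) = 0` for all `n` (i.e. `d : S_1 → S_0` is surjective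
and `ker (d : S_{n+1} → S_n) = range (d : S_{n+2} → S_{n+1})`).  Let
`0 → C′ → C → C″ → 0` be a degreewise split short exact sequence of `ℕ`-indexed chain
complexes of `k`-modules.  Then the induced sequence of `k`-modules of chain maps
`0 → Hom(C″, S) → Hom(C, S) → Hom(C′, S) → 0` is exact; in particular every chain map
`C′ → S` extends to a chain map `C → S`. -/
theorem statement11 (k : Type) [CommRing k] (S C' C C'' : Cpx k)
    -- S is degreewise projective with vanishing homology
    (hproj : ∀ n, Module.Projective k (S.X n))
    (hS0 : Function.Surjective (S.d 0))
    (hSex : ∀ n, LinearMap.ker (S.d n) = LinearMap.range (S.d (n + 1)))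
    -- a degreewise split short exact sequence 0 → C′ → C → C″ → 0
    (ff : CpxHom k C' C) (gg : CpxHom k C C'')
    (hinj : ∀ n, Function.Injective (ff.f n))
    (hsurj : ∀ n, Function.Surjective (gg.f n))
    (hex : ∀ n, LinearMap.range (ff.f n) = LinearMap.ker (gg.f n))
    (hsplit : ∀ n, ∃ r : C.X n →ₗ[k] C'.X n, r.comp (ff.f n) = LinearMap.id) :
    -- injectivity of Hom(C″, S) → Hom(C, S)
    (∀ ψ : CpxHom k C'' S, (∀ n, (ψ.f n).comp (gg.f n) = 0) → ∀ n, ψ.f n = 0) ∧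
    -- exactness at Hom(C, S)
    (∀ φ : CpxHom k C S,
        (∀ n, (φ.f n).comp (ff.f n) = 0) ↔
          ∃ ψ : CpxHom k C'' S, ∀ n, φ.f n = (ψ.f n).comp (gg.f n)) ∧
    -- surjectivity of Hom(C, S) → Hom(C′, S) : every chain map C′ → S extends
    (∀ φ' : CpxHom k C' S, ∃ φ : CpxHom k C S, ∀ n, (φ.f n).comp (ff.f n) = φ'.f n) := by
  classical
  refine ⟨?_, ?_, ?_⟩
  · -- injectivity
    intro ψ hψ n
    ext x
    obtain ⟨y, rfl⟩ := hsurj n x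
    simpa using DFunLike.congr_fun (hψ n) y
  · -- exactness at Hom(C, S)
    intro φ
    constructor
    · intro hφ
      have hle : ∀ n, LinearMap.ker (gg.f n) ≤ LinearMap.ker (φ.f n) := by
        intro n x hx
        rw [← hex n] at hx
        obtain ⟨y, rfl⟩ := hx
        simpa using DFunLike.congr_fun (hφ n) y
      let e : ∀ n, (C.X n ⧸ LinearMap.ker (gg.f n)) ≃ₗ[k] C''.X n := fun n =>
        (gg.f n).quotKerEquivOfSurjective (hsurj n)
      let ψf : ∀ n, C''.X n →ₗ[k] S.X n := fun n =>
        ((LinearMap.ker (gg.f n)).liftQ (φ.f n) (hle n)).comp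
          ((e n).symm : C''.X n →ₗ[k] (C.X n ⧸ LinearMap.ker (gg.f n)))
      have hψg : ∀ n (x : C.X n), ψf n (gg.f n x) = φ.f n x := by
        intro n x
        have h1 : (e n).symm (gg.f n x) = Submodule.Quotient.mk x := by
          rw [LinearEquiv.symm_apply_eq]
          simp [e, LinearMap.quotKerEquivOfSurjective]
        show ((LinearMap.ker (gg.f n)).liftQ (φ.f n) (hle n)) ((e n).symm (gg.f n x)) = _
        rw [h1]
        simp
      refine ⟨⟨ψf, ?_⟩, ?_⟩
      · intro n
        ext x
        obtain ⟨y, rfl⟩ := hsurj (n + 1) x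
        have h2 : C''.d n (gg.f (n + 1) y) = gg.f n (C.d n y) :=
          (DFunLike.congr_fun (gg.comm n) y).symm
        have h3 : φ.f n (C.d n y) = S.d n (φ.f (n + 1) y) :=
          DFunLike.congr_fun (φ.comm n) y
        simp only [LinearMap.coe_comp, Function.comp_apply]
        rw [h2, hψg, h3, hψg]
      · intro n
        ext x
        exact (hψg n x).symm
    · rintro ⟨ψ, hψ⟩ n
      ext x
      have hker : gg.f n (ff.f n x) = 0 := by
        have : ff.f n x ∈ LinearMap.ker (gg.f n) := (hex n) ▸ ⟨x, rfl⟩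
        exact this
      simp [hψ n, hker]
  · -- surjectivity: every chain map C' → S extends
    intro φ'
    -- contracting homotopy of S
    have key : ∃ h : ∀ n, S.X n →ₗ[k] S.X (n + 1),
        (S.d 0).comp (h 0) = LinearMap.id ∧
        ∀ n, (S.d (n + 1)).comp (h (n + 1)) + (h n).comp (S.d n) = LinearMap.id := by
      have base : ∃ a0 : S.X 0 →ₗ[k] S.X 1, (S.d 0).comp a0 = LinearMap.id := by
        have := hproj 0
        exact Module.projective_lifting_property (S.d 0) LinearMap.id hS0
      obtain ⟨a0, ha0⟩ := base
      have q0 : (S.d 0).comp (a0.comp (S.d 0)) = S.d 0 := by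
        rw [← LinearMap.comp_assoc, ha0, LinearMap.id_comp]
      have step : ∀ n (a : S.X n →ₗ[k] S.X (n + 1)),
          (S.d n).comp (a.comp (S.d n)) = S.d n →
          ∃ b : S.X (n + 1) →ₗ[k] S.X (n + 2),
            (S.d (n + 1)).comp (b.comp (S.d (n + 1))) = S.d (n + 1) ∧
            (S.d (n + 1)).comp b + a.comp (S.d n) = LinearMap.id := by
        intro n a ha
        set T : S.X (n + 1) →ₗ[k] S.X (n + 1) := LinearMap.id - a.comp (S.d n) with hT
        have hmem : ∀ x, T x ∈ LinearMap.range (S.d (n + 1)) := by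
          intro x
          rw [← hSex n, LinearMap.mem_ker]
          have := DFunLike.congr_fun ha x
          simp only [LinearMap.coe_comp, Function.comp_apply] at this ⊢
          simp [hT, this]
        have := hproj (n + 1)
        obtain ⟨b, hb⟩ := Module.projective_lifting_property
          (S.d (n + 1)).rangeRestrict
          (T.codRestrict (LinearMap.range (S.d (n + 1))) hmem)
          (LinearMap.surjective_rangeRestrict _)
        have hdb : (S.d (n + 1)).comp b = T := by
          ext x
          have := DFunLike.congr_fun hb x
          exact congrArg Subtype.val this
        refine ⟨b, ?_, ?_⟩
        · ext x
          have hdd := DFunLike.congr_fun (S.dd n) (x)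
          have := DFunLike.congr_fun hdb (S.d (n + 1) x)
          simp only [LinearMap.coe_comp, Function.comp_apply] at this ⊢
          rw [this]
          simp only [hT, LinearMap.sub_apply, LinearMap.id_apply, LinearMap.coe_comp,
            Function.comp_apply]
          simp only [LinearMap.coe_comp, Function.comp_apply, LinearMap.zero_apply] at hdd
          rw [hdd]
          simp
        · rw [hdb, hT]
          abel
      obtain ⟨h, h0eq, hrel⟩ := depChoice
        (fun n (a : S.X n →ₗ[k] S.X (n + 1)) => (S.d n).comp (a.comp (S.d n)) = S.d n)
        (fun n a b => (S.d (n + 1)).comp b + a.comp (S.d n) = LinearMap.id)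
        a0 q0 step
      exact ⟨h, by rw [h0eq, ha0], hrel⟩
    obtain ⟨h, hd0, hrel⟩ := key
    -- the naive degreewise extension
    let u : ∀ n, C.X n →ₗ[k] S.X n := fun n => (φ'.f n).comp ((hsplit n).choose)
    have hu : ∀ n (x : C'.X n), u n (ff.f n x) = φ'.f n x := by
      intro n x
      have := DFunLike.congr_fun ((hsplit n).choose_spec) x
      simp only [LinearMap.coe_comp, Function.comp_apply, LinearMap.id_apply] at this
      simp [u, this]
    -- the corrected chain map
    let φf : ∀ n, C.X n →ₗ[k] S.X n := fun n =>
      Nat.casesOn n (u 0) (fun m =>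
        ((S.d (m + 1)).comp (h (m + 1))).comp (u (m + 1)) +
          (h m).comp ((u m).comp (C.d m)))
    have hcomm : ∀ n, (φf n).comp (C.d n) = (S.d n).comp (φf (n + 1)) := by
      intro n
      ext x
      match n with
      | 0 =>
        have hdd := DFunLike.congr_fun (S.dd 0) (h 1 (u 1 x))
        have hid := DFunLike.congr_fun hd0 (u 0 (C.d 0 x))
        simp only [LinearMap.coe_comp, Function.comp_apply, LinearMap.zero_apply] at hdd
        simp only [LinearMap.coe_comp, Function.comp_apply, LinearMap.id_apply] at hid
        simp only [φf, LinearMap.coe_comp, Function.comp_apply, LinearMap.add_apply,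
          LinearMap.map_add]
        rw [hdd, hid]
        simp
      | m + 1 =>
        have hCdd := DFunLike.congr_fun (C.dd m) x
        have hSdd := DFunLike.congr_fun (S.dd (m + 1)) (h (m + 2) (u (m + 2) x))
        simp only [LinearMap.coe_comp, Function.comp_apply, LinearMap.zero_apply] at hCdd hSdd
        simp only [φf, LinearMap.coe_comp, Function.comp_apply, LinearMap.add_apply,
          LinearMap.map_add]
        rw [hCdd, hSdd]
        simp
    refine ⟨⟨φf, hcomm⟩, ?_⟩
    intro n
    ext x
    match n with
    | 0 => exact hu 0 x
    | m + 1 =>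
      have h1 : C.d m (ff.f (m + 1) x) = ff.f m (C'.d m x) :=
        (DFunLike.congr_fun (ff.comm m) x).symm
      have h2 : φ'.f m (C'.d m x) = S.d m (φ'.f (m + 1) x) :=
        DFunLike.congr_fun (φ'.comm m) x
      have h3 := DFunLike.congr_fun (hrel m) (φ'.f (m + 1) x)
      simp only [LinearMap.add_apply, LinearMap.coe_comp, Function.comp_apply,
        LinearMap.id_apply] at h3
      simp only [φf, LinearMap.coe_comp, Function.comp_apply, LinearMap.add_apply]
      rw [hu, h1, hu, h2, h3]
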